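/- The basis element (Λ, 3) with Λ consisting of three parts equal to 2 (i.e., x_2^3 ∂_3, which requires n ≥ 3) satisfies WD(Λ, 3) = n, and hence lev_i(Λ, 3) > i for every i ≥ −1; consequently (Λ, 3) ∉ N_i for all i, so the union of the chain (N_i) is a proper subset of the set of all basis elements. -/

import Mathlib

/-- Weight of a partition (finitely supported sequence of multiplicities). -/
def wt (Λ : ℕ →₀ ℕ) : ℕ := Λ.sum fun m c => m * c

/-- Degree (number of parts, with multiplicity) of a partition. -/
def deg (Λ : ℕ →₀ ℕ) : ℕ := Λ.sum fun _ c => c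

/-- Basis element of the integral Lie ring of partitions: a pair (Λ, k) with
1 ≤ k ≤ n and all parts of Λ in {1,…,k-1}. -/
def IsBasisElt (n : ℕ) (Λ : ℕ →₀ ℕ) (k : ℕ) : Prop :=
  1 ≤ k ∧ k ≤ n ∧ Λ 0 = 0 ∧ ∀ m, k ≤ m → Λ m = 0

/-- The weight-degree function. -/
def WD (n : ℕ) (Λ : ℕ →₀ ℕ) (k : ℕ) : ℤ :=
  (wt Λ : ℤ) - (deg Λ : ℤ) + (n : ℤ) - (k : ℤ)

/-- h_i = ⌊(i-1)/(n-1)⌋ + 1. -/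
def hh (n : ℕ) (i : ℤ) : ℤ := (i - 1).fdiv ((n : ℤ) - 1) + 1

/-- r_i = i - (h_i - 1)(n-1). -/
def rr (n : ℕ) (i : ℤ) : ℤ := i - (hh n i - 1) * ((n : ℤ) - 1)

/-- The i-th level function lev_i(Λ,k) = h_i·WD(Λ,k) + deg(Λ) - 1. -/
def lev (n : ℕ) (i : ℤ) (Λ : ℕ →₀ ℕ) (k : ℕ) : ℤ :=
  hh n i * WD n Λ k + (deg Λ : ℤ) - 1

/-- N_i = set of basis elements with lev_j ≤ j for some -1 ≤ j ≤ i. -/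
def Nset (n : ℕ) (i : ℤ) : Set ((ℕ →₀ ℕ) × ℕ) :=
  {p | IsBasisElt n p.1 p.2 ∧ ∃ j : ℤ, -1 ≤ j ∧ j ≤ i ∧ lev n j p.1 p.2 ≤ j}

/-- L_i = set of basis elements for which i is the least index j ≥ -1 with lev_j = j. -/
def Lset (n : ℕ) (i : ℤ) : Set ((ℕ →₀ ℕ) × ℕ) :=
  {p | IsBasisElt n p.1 p.2 ∧ lev n i p.1 p.2 = i ∧
    ∀ j : ℤ, -1 ≤ j → lev n j p.1 p.2 = j → i ≤ j}

/-- The partition function p(s). -/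
def pfun (s : ℕ) : ℕ := Fintype.card (Nat.Partition s)

/-- b_m = Σ_{s=0}^m p(s). -/
def bnat (m : ℕ) : ℕ := ∑ s ∈ Finset.range (m + 1), pfun s

/-- c_m = Σ_{s=0}^m b_s. -/
def cnat (m : ℕ) : ℕ := ∑ s ∈ Finset.range (m + 1), bnat s

/-- b extended to ℤ, with b_m = 0 for m < 0. -/
def bint (m : ℤ) : ℕ := if m < 0 then 0 else bnat m.toNat

/-- The period map per(Λ,k) = (Λ + (n-1-WD(Λ,k))·e₁, k). -/
noncomputable def per (n : ℕ) (p : (ℕ →₀ ℕ) × ℕ) : (ℕ →₀ ℕ) × ℕ :=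
  (p.1 + Finsupp.single 1 (((n : ℤ) - 1 - WD n p.1 p.2).toNat), p.2)

theorem wt_single (m c : ℕ) : wt (Finsupp.single m c) = m * c := by
  simp [wt]

theorem deg_single (m c : ℕ) : deg (Finsupp.single m c) = c := by
  simp [deg]

theorem isBasisElt_single {n m c k : ℕ} (hm : 1 ≤ m) (hmk : m < k) (hk : k ≤ n) :
    IsBasisElt n (Finsupp.single m c) k :=
  ⟨by omega, hk, Finsupp.single_eq_of_ne (by omega),
    fun _ hkm => Finsupp.single_eq_of_ne (by omega)⟩

theorem le_hh_mul {n : ℕ} (hn : 2 ≤ n) (i : ℤ) : i ≤ hh n i * ((n : ℤ) - 1) := by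
  have hpos : (0 : ℤ) < n - 1 := by omega
  have hdiv := Int.lt_ediv_add_one_mul_self (i - 1) hpos
  rw [hh, Int.fdiv_eq_ediv_of_nonneg _ hpos.le]
  omega

theorem hh_nonneg {n : ℕ} (hn : 2 ≤ n) {i : ℤ} (hi : 2 - (n : ℤ) ≤ i) : 0 ≤ hh n i := by
  have hpos : (0 : ℤ) < n - 1 := by omega
  have hdiv : -1 ≤ (i - 1) / ((n : ℤ) - 1) := by
    rw [Int.le_ediv_iff_mul_le hpos]
    omega
  rw [hh, Int.fdiv_eq_ediv_of_nonneg _ hpos.le]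
  omega

/-- Since `i ≤ h_i (n - 1)`, the level `h_i WD + deg - 1 ≥ h_i n + 1` overshoots `i`. -/
theorem lt_lev_of_le_WD {n : ℕ} (hn : 3 ≤ n) {i : ℤ} (hi : -1 ≤ i) {Λ : ℕ →₀ ℕ} {k : ℕ}
    (hWD : (n : ℤ) ≤ WD n Λ k) (hdeg : 2 ≤ deg Λ) : i < lev n i Λ k := by
  have hh0 := hh_nonneg (n := n) (by omega) (i := i) (by omega)
  have hi_le := le_hh_mul (n := n) (by omega) i
  have hmul : hh n i * n ≤ hh n i * WD n Λ k := mul_le_mul_of_nonneg_left hWD hh0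
  unfold lev
  linarith

theorem notMem_Nset_of_lt_lev {n : ℕ} {p : (ℕ →₀ ℕ) × ℕ}
    (hp : ∀ j : ℤ, -1 ≤ j → j < lev n j p.1 p.2) (i : ℤ) : p ∉ Nset n i :=
  fun ⟨_, j, hj, _, hlev⟩ => (hp j hj).not_ge hlev

theorem iUnion_Nset_subset (n : ℕ) :
    (⋃ i : ℤ, Nset n i) ⊆ {p : (ℕ →₀ ℕ) × ℕ | IsBasisElt n p.1 p.2} := by
  simp only [Set.iUnion_subset_iff]
  exact fun _ _ hp => hp.1

theorem stmt19 (n : ℕ) (hn : 3 ≤ n) :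
    WD n (Finsupp.single 2 3) 3 = (n : ℤ) ∧
    (∀ i : ℤ, -1 ≤ i → i < lev n i (Finsupp.single 2 3) 3) ∧
    (∀ i : ℤ, (Finsupp.single 2 3, 3) ∉ Nset n i) ∧
    (⋃ i : ℤ, Nset n i) ⊂ {p : (ℕ →₀ ℕ) × ℕ | IsBasisElt n p.1 p.2} := by
  have hWD : WD n (Finsupp.single 2 3) 3 = n := by
    simp only [WD, wt_single, deg_single]
    push_cast
    ring
  have hlev : ∀ i : ℤ, -1 ≤ i → i < lev n i (Finsupp.single 2 3) 3 := fun i hi =>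
    lt_lev_of_le_WD hn hi hWD.ge (by rw [deg_single]; norm_num)
  have hnot := notMem_Nset_of_lt_lev (p := (Finsupp.single 2 3, 3)) hlev
  refine ⟨hWD, hlev, hnot, (iUnion_Nset_subset n).ssubset_of_not_subset fun hsub => ?_⟩
  have hbasis : IsBasisElt n (Finsupp.single 2 3) 3 :=
    isBasisElt_single (by norm_num) (by norm_num) hn
  obtain ⟨i, hi⟩ := Set.mem_iUnion.mp (hsub (a := (Finsupp.single 2 3, 3)) hbasis)
  exact hnot i hi
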